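/- Fix d ≥ 1 and n ≥ 1 with n ≥ d². Then f(n,d) equals the number of pairs (α, β) of partitions (possibly empty) with |α| + |β| = n - d², where every part of α is at most d and every part of β is at most d - 1. -/

import Mathlib

/-- The `d`-th largest part of a partition (1-indexed); `0` if the index is out of range. -/
def nthPart {n : ℕ} (p : n.Partition) (d : ℕ) : ℕ :=
  (p.parts.sort (· ≥ ·)).getD (d - 1) 0

/-- `f n d` is the number of partitions of `n` with fixed point `d`,
i.e. whose `d`-th largest part equals `d`. -/
noncomputable def f (n d : ℕ) : ℕ :=
  Nat.card {p : n.Partition // nthPart p d = d}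

/-!
If `λ_d = d`, the Young diagram of `λ` contains the `d × d` square, and row `d` ends with it.
Removing the square leaves the rows below it, a partition `α` with parts at most `d`, and the
parts of the first `d - 1` rows to the right of the square, a partition `μ` with at most `d - 1`
parts; conversely any such `α` and `μ` glue back around the square. Transposing the Young
diagram of `μ` turns it into a partition with parts at most `d - 1`.
-/

namespace YoungDiagram

theorem card_eq_sum_rowLens (μ : YoungDiagram) : μ.card = μ.rowLens.sum := by
  have hrows : Set.MapsTo Prod.fst (μ.cells : Set (ℕ × ℕ)) (Finset.range (μ.colLen 0)) :=
    fun c hc => Finset.mem_range.2 <| mem_iff_lt_colLen.1 <|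
      μ.up_left_mem le_rfl (Nat.zero_le c.2) hc
  calc μ.card = ∑ i ∈ Finset.range (μ.colLen 0), (μ.row i).card :=
        Finset.card_eq_sum_card_fiberwise hrows
    _ = ∑ i ∈ Finset.range (μ.colLen 0), μ.rowLen i := by simp only [rowLen_eq_card]
    _ = μ.rowLens.sum := by rw [Finset.sum_eq_multiset_sum]; rfl

theorem card_transpose (μ : YoungDiagram) : μ.transpose.card = μ.card :=
  Finset.card_map _

theorem forall_mem_rowLens_le_iff (μ : YoungDiagram) (k : ℕ) :
    (∀ x ∈ μ.rowLens, x ≤ k) ↔ μ.rowLen 0 ≤ k := by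
  constructor
  · intro h
    by_cases h0 : 0 < μ.colLen 0
    · exact h _ (List.mem_map.2 ⟨0, List.mem_range.2 h0, rfl⟩)
    · have : μ.rowLen 0 = 0 := by
        by_contra hne
        exact h0 (mem_iff_lt_colLen.1 (mem_iff_lt_rowLen.2 (Nat.pos_of_ne_zero hne)))
      omega
  · rintro h _ hx
    obtain ⟨i, -, rfl⟩ := List.mem_map.1 hx
    exact (μ.rowLen_anti 0 i (Nat.zero_le i)).trans h

end YoungDiagram

namespace Nat.Partition

open Multiset YoungDiagram

variable {n : ℕ}

def toYoungDiagram (p : n.Partition) : YoungDiagram :=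
  ofRowLens (p.parts.sort (· ≥ ·)) (pairwise_sort _ _).sortedGE

theorem rowLens_toYoungDiagram (p : n.Partition) :
    p.toYoungDiagram.rowLens = p.parts.sort (· ≥ ·) :=
  rowLens_ofRowLens_eq_self fun _ hx => p.parts_pos ((mem_sort _).1 hx)

def equivYoungDiagram (n : ℕ) : n.Partition ≃ {μ : YoungDiagram // μ.card = n} where
  toFun p := ⟨p.toYoungDiagram, by
    rw [card_eq_sum_rowLens, rowLens_toYoungDiagram, ← sum_coe, sort_eq, p.parts_sum]⟩
  invFun μ := ⟨μ.1.rowLens, fun hx => μ.1.pos_of_mem_rowLens _ hx, by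
    rw [sum_coe, ← card_eq_sum_rowLens, μ.2]⟩
  left_inv p := Nat.Partition.ext (by simp only [rowLens_toYoungDiagram, sort_eq])
  right_inv μ := Subtype.ext <| by
    have hsort : sort (μ.1.rowLens : Multiset ℕ) (· ≥ ·) = μ.1.rowLens :=
      List.mergeSort_eq_self _ μ.1.rowLens_sorted.pairwise
    simp only [toYoungDiagram, hsort, ofRowLens_to_rowLens_eq_self]

theorem card_parts_eq_colLen (p : n.Partition) : p.parts.card = p.toYoungDiagram.colLen 0 := by
  rw [← length_rowLens, rowLens_toYoungDiagram, length_sort]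

theorem forall_mem_parts_le_iff (p : n.Partition) (k : ℕ) :
    (∀ x ∈ p.parts, x ≤ k) ↔ p.toYoungDiagram.rowLen 0 ≤ k := by
  simp only [← forall_mem_rowLens_le_iff, rowLens_toYoungDiagram, mem_sort]

def conjEquiv (n : ℕ) : n.Partition ≃ n.Partition :=
  (equivYoungDiagram n).trans <|
    (transposeOrderIso.toEquiv.subtypeEquiv fun μ => by
      simp [transposeOrderIso, card_transpose]).trans (equivYoungDiagram n).symm

theorem toYoungDiagram_conjEquiv (p : n.Partition) :
    (conjEquiv n p).toYoungDiagram = p.toYoungDiagram.transpose :=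
  congrArg Subtype.val ((equivYoungDiagram n).apply_symm_apply _)

theorem card_card_parts_le_eq (n k : ℕ) :
    Nat.card {p : n.Partition // p.parts.card ≤ k} =
      Nat.card {p : n.Partition // ∀ x ∈ p.parts, x ≤ k} :=
  Nat.card_congr <| (conjEquiv n).subtypeEquiv fun p => by
    rw [forall_mem_parts_le_iff, toYoungDiagram_conjEquiv, rowLen_transpose,
      card_parts_eq_colLen]

end Nat.Partition

open Multiset

theorem List.le_getD_iff_lt_countP {l : List ℕ} (hl : l.Pairwise (· ≥ ·)) {t : ℕ} (ht : 0 < t)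
    (j : ℕ) : t ≤ l.getD j 0 ↔ j < l.countP (t ≤ ·) := by
  induction l generalizing j with
  | nil => simp only [List.getD_nil, List.countP_nil]; omega
  | cons a l ih =>
    obtain ⟨ha, hl⟩ := List.pairwise_cons.1 hl
    by_cases hta : t ≤ a
    · cases j with
      | zero => simp [hta]
      | succ j => simp only [List.getD_cons_succ, ih hl, List.countP_cons, hta]; simp
    · have hl0 : l.countP (t ≤ ·) = 0 :=
        List.countP_eq_zero.2 fun b hb => by have := ha b hb; simp only [decide_eq_true_eq]; omega
      cases j with
      | zero => simp [hta, hl0]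
      | succ j => simp only [List.getD_cons_succ, ih hl, List.countP_cons, hta, hl0]; simp

theorem nthPart_eq_self_iff {n d : ℕ} (hd : 1 ≤ d) (p : n.Partition) :
    nthPart p d = d ↔ p.parts.countP (d < ·) < d ∧ d ≤ p.parts.countP (d ≤ ·) := by
  have hsorted := pairwise_sort p.parts (· ≥ ·)
  have hcount (t : ℕ) : (p.parts.sort (· ≥ ·)).countP (t ≤ ·) = p.parts.countP (t ≤ ·) := by
    conv_rhs => rw [← sort_eq p.parts (· ≥ ·)]
    rfl
  have hge := List.le_getD_iff_lt_countP hsorted (by omega : 0 < d) (d - 1)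
  have hgt := List.le_getD_iff_lt_countP hsorted (by omega : 0 < d + 1) (d - 1)
  rw [hcount] at hge hgt
  have hlt : p.parts.countP (d + 1 ≤ ·) = p.parts.countP (d < ·) := rfl
  unfold nthPart
  omega

section DurfeeSquare

variable (d : ℕ)

/-- With `k` parts exceeding `d`, the rows `k + 1, …, d` of the square are parts equal to `d`;
these `d - k` parts are removed. -/
def belowSquare (s : Multiset ℕ) : Multiset ℕ :=
  s.filter (· ≤ d) - replicate (d - s.countP (d < ·)) d

def rightOfSquare (s : Multiset ℕ) : Multiset ℕ :=
  (s.filter (d < ·)).map (· - d)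

def withSquare (a b : Multiset ℕ) : Multiset ℕ :=
  b.map (· + d) + replicate (d - card b) d + a

variable {d}

theorem countP_le_eq_countP_lt_add_count (s : Multiset ℕ) :
    s.countP (d ≤ ·) = s.countP (d < ·) + s.count d := by
  induction s using Multiset.induction_on with
  | empty => simp
  | cons a s ih => simp only [countP_cons, count_cons, ih]; split_ifs <;> omega

theorem mem_of_mem_belowSquare {s : Multiset ℕ} {x : ℕ} (hx : x ∈ belowSquare d s) :
    x ∈ s ∧ x ≤ d :=
  mem_filter.1 (mem_of_le tsub_le_self hx)

theorem card_rightOfSquare (s : Multiset ℕ) : card (rightOfSquare d s) = s.countP (d < ·) := by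
  rw [rightOfSquare, card_map, countP_eq_card_filter]

theorem withSquare_belowSquare_rightOfSquare {s : Multiset ℕ}
    (hs : s.countP (d < ·) < d ∧ d ≤ s.countP (d ≤ ·)) :
    withSquare d (belowSquare d s) (rightOfSquare d s) = s := by
  have hright : (rightOfSquare d s).map (· + d) = s.filter (d < ·) := by
    rw [rightOfSquare, map_map]
    conv_rhs => rw [← map_id (s.filter (d < ·))]
    exact Multiset.map_congr rfl fun x hx => Nat.sub_add_cancel (of_mem_filter hx).le
  have hsquare : replicate (d - s.countP (d < ·)) d ≤ s.filter (· ≤ d) := by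
    rw [← le_count_iff_replicate_le, count_filter_of_pos (p := (· ≤ d)) le_rfl]
    have := countP_le_eq_countP_lt_add_count (d := d) s
    omega
  rw [withSquare, card_rightOfSquare, hright, add_assoc, belowSquare,
    add_tsub_cancel_of_le hsquare]
  simpa only [not_lt] using filter_add_not (d < ·) s

variable {a b : Multiset ℕ}

theorem filter_lt_withSquare (ha : ∀ x ∈ a, x ≤ d) (hb : ∀ x ∈ b, 0 < x) :
    (withSquare d a b).filter (d < ·) = b.map (· + d) := by
  have hright : ∀ y ∈ b.map (· + d), d < y := by
    simp only [mem_map]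
    rintro _ ⟨x, hx, rfl⟩
    have := hb x hx
    omega
  have hsquare : ∀ y ∈ replicate (d - card b) d, ¬ d < y := fun y hy => by
    rw [eq_of_mem_replicate hy]; exact lt_irrefl d
  have hbelow : ∀ y ∈ a, ¬ d < y := fun y hy => not_lt.2 (ha y hy)
  rw [withSquare, filter_add, filter_add, filter_eq_self.2 hright, filter_eq_nil.2 hsquare,
    filter_eq_nil.2 hbelow, add_zero, add_zero]

theorem filter_le_withSquare (ha : ∀ x ∈ a, x ≤ d) (hb : ∀ x ∈ b, 0 < x) :
    (withSquare d a b).filter (· ≤ d) = replicate (d - card b) d + a := by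
  have hright : ∀ y ∈ b.map (· + d), ¬ y ≤ d := by
    simp only [mem_map]
    rintro _ ⟨x, hx, rfl⟩
    have := hb x hx
    omega
  have hsquare : ∀ y ∈ replicate (d - card b) d, y ≤ d := fun y hy => (eq_of_mem_replicate hy).le
  rw [withSquare, filter_add, filter_add, filter_eq_nil.2 hright, filter_eq_self.2 hsquare,
    filter_eq_self.2 ha, zero_add]

theorem countP_lt_withSquare (ha : ∀ x ∈ a, x ≤ d) (hb : ∀ x ∈ b, 0 < x) :
    (withSquare d a b).countP (d < ·) = card b := by
  rw [countP_eq_card_filter, filter_lt_withSquare ha hb, card_map]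

theorem rightOfSquare_withSquare (ha : ∀ x ∈ a, x ≤ d) (hb : ∀ x ∈ b, 0 < x) :
    rightOfSquare d (withSquare d a b) = b := by
  simp [rightOfSquare, filter_lt_withSquare ha hb, map_map]

theorem belowSquare_withSquare (ha : ∀ x ∈ a, x ≤ d) (hb : ∀ x ∈ b, 0 < x) :
    belowSquare d (withSquare d a b) = a := by
  rw [belowSquare, filter_le_withSquare ha hb, countP_lt_withSquare ha hb, add_tsub_cancel_left]

theorem le_countP_le_withSquare (hb : card b ≤ d) : d ≤ (withSquare d a b).countP (d ≤ ·) := by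
  have hsquare : (b.map (· + d) + replicate (d - card b) d).countP (d ≤ ·) = d := by
    rw [countP_add, countP_eq_card.2, countP_eq_card.2, card_map, card_replicate]
    · omega
    · exact fun x hx => (eq_of_mem_replicate hx).ge
    · simp only [mem_map]
      rintro _ ⟨x, -, rfl⟩
      omega
  rw [withSquare, countP_add]
  omega

theorem sum_withSquare (hb : card b ≤ d) : (withSquare d a b).sum = a.sum + b.sum + d ^ 2 := by
  have hsquare : card b * d + (d - card b) * d = d ^ 2 := by
    rw [← add_mul, Nat.add_sub_cancel' hb, sq]
  rw [withSquare, sum_add, sum_add, sum_map_add, map_const', sum_replicate, sum_replicate,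
    smul_eq_mul, smul_eq_mul, map_id']
  omega

end DurfeeSquare

namespace Nat.Partition

open Finset

def sigmaAntidiagonalEquiv (m : ℕ) (P Q : Multiset ℕ → Prop) :
    (Σ ij : antidiagonal m,
      {α : ij.1.1.Partition // P α.parts} × {β : ij.1.2.Partition // Q β.parts}) ≃
      {ab : Multiset ℕ × Multiset ℕ // ((∀ x ∈ ab.1, 0 < x) ∧ P ab.1) ∧
        ((∀ x ∈ ab.2, 0 < x) ∧ Q ab.2) ∧ ab.1.sum + ab.2.sum = m} where
  toFun x := ⟨(x.2.1.1.parts, x.2.2.1.parts), ⟨fun _ h => x.2.1.1.parts_pos h, x.2.1.2⟩,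
    ⟨fun _ h => x.2.2.1.parts_pos h, x.2.2.2⟩, by
      rw [x.2.1.1.parts_sum, x.2.2.1.parts_sum]; exact mem_antidiagonal.1 x.1.2⟩
  invFun ab := ⟨⟨(ab.1.1.sum, ab.1.2.sum), mem_antidiagonal.2 ab.2.2.2⟩,
    ⟨⟨ab.1.1, fun h => ab.2.1.1 _ h, rfl⟩, ab.2.1.2⟩,
    ⟨⟨ab.1.2, fun h => ab.2.2.1.1 _ h, rfl⟩, ab.2.2.1.2⟩⟩
  left_inv := by
    rintro ⟨⟨⟨i, j⟩, hij⟩, ⟨⟨a, ha, hai⟩, hα⟩, ⟨⟨b, hb, hbj⟩, hβ⟩⟩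
    dsimp only at hai hbj
    subst hai hbj
    rfl
  right_inv _ := rfl

end Nat.Partition

def fixedPointEquiv {n d : ℕ} (hd : 1 ≤ d) (hn : d ^ 2 ≤ n) :
    {p : n.Partition // p.parts.countP (d < ·) < d ∧ d ≤ p.parts.countP (d ≤ ·)} ≃
      {ab : Multiset ℕ × Multiset ℕ // ((∀ x ∈ ab.1, 0 < x) ∧ ∀ x ∈ ab.1, x ≤ d) ∧
        ((∀ x ∈ ab.2, 0 < x) ∧ card ab.2 ≤ d - 1) ∧ ab.1.sum + ab.2.sum = n - d ^ 2} where
  toFun p := ⟨(belowSquare d p.1.parts, rightOfSquare d p.1.parts),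
    ⟨fun _ hx => p.1.parts_pos (mem_of_mem_belowSquare hx).1,
      fun _ hx => (mem_of_mem_belowSquare hx).2⟩,
    ⟨fun _ hx => by
      obtain ⟨y, hy, rfl⟩ := mem_map.1 hx
      exact Nat.sub_pos_of_lt (of_mem_filter hy), by
      rw [card_rightOfSquare]; exact Nat.le_sub_one_of_lt p.2.1⟩, by
    have hsum := congrArg Multiset.sum (withSquare_belowSquare_rightOfSquare p.2)
    rw [sum_withSquare (by rw [card_rightOfSquare]; exact p.2.1.le), p.1.parts_sum] at hsum
    dsimp only
    omega⟩
  invFun := fun ⟨(a, b), ⟨ha₀, ha⟩, ⟨hb₀, hb⟩, hsum⟩ => by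
    dsimp only at ha₀ ha hb₀ hb hsum ⊢
    exact ⟨⟨withSquare d a b, fun {x} hx => by
        simp only [withSquare, mem_add, mem_map, mem_replicate] at hx
        rcases hx with (⟨y, -, rfl⟩ | ⟨-, rfl⟩) | hx
        · omega
        · omega
        · exact ha₀ x hx, by
        rw [sum_withSquare (by omega)]; omega⟩,
      by rw [countP_lt_withSquare ha hb₀]; omega, le_countP_le_withSquare (by omega)⟩
  left_inv p := Subtype.ext <| Nat.Partition.ext <| withSquare_belowSquare_rightOfSquare p.2
  right_inv := fun ⟨(_, _), ⟨_, ha⟩, ⟨hb₀, _⟩, _⟩ =>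
    Subtype.ext <| Prod.ext (belowSquare_withSquare ha hb₀) (rightOfSquare_withSquare ha hb₀)

/-- For `d ≥ 1` and `n ≥ d²`, `f(n,d)` equals the number of pairs `(α, β)` of
partitions with `|α| + |β| = n - d²`, where all parts of `α` are at most `d` and
all parts of `β` are at most `d - 1`. -/
theorem f_eq_pairs_count (n d : ℕ) (hd : 1 ≤ d) (hn : d ^ 2 ≤ n) :
    f n d = ∑ i ∈ Finset.range (n - d ^ 2 + 1),
      Nat.card {α : Nat.Partition i // ∀ x ∈ α.parts, x ≤ d} *
        Nat.card {β : Nat.Partition (n - d ^ 2 - i) // ∀ x ∈ β.parts, x ≤ d - 1} := by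
  rw [← Finset.Nat.sum_antidiagonal_eq_sum_range_succ (fun i j =>
    Nat.card {α : Nat.Partition i // ∀ x ∈ α.parts, x ≤ d} *
      Nat.card {β : Nat.Partition j // ∀ x ∈ β.parts, x ≤ d - 1})]
  simp_rw [← Nat.Partition.card_card_parts_le_eq _ (d - 1), ← Nat.card_prod]
  rw [← Finset.sum_coe_sort, ← Nat.card_sigma, f]
  exact Nat.card_congr <| (Equiv.subtypeEquivRight (nthPart_eq_self_iff hd)).trans <|
    (fixedPointEquiv hd hn).trans (Nat.Partition.sigmaAntidiagonalEquiv _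
      (fun s => ∀ x ∈ s, x ≤ d) (fun s => card s ≤ d - 1)).symm
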